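/- arXiv:1803.07842 — 2 statements merged into one kernel-verified Lean document; each statement's English description precedes it below -/
import Mathlib

section
/- Suppose 0 < λ_c ≤ λ_n, and suppose the contract (p_c, r_c, p_n, r_n) with r_c, r_n ≥ 0 satisfies the constraints IC_{c,n}: r_c + exp(-λ_c·r_c)/λ_c - p_c ≥ r_n + exp(-λ_c·r_n)/λ_c - p_n, and IR_n: r_n + exp(-λ_n·r_n)/λ_n - p_n ≥ 0. Then the constraint IR_c: r_c + exp(-λ_c·r_c)/λ_c - p_c ≥ 0 also holds. -/
/-- IC_{c,n} and IR_n imply IR_c, under `0 < λ_c ≤ λ_n` and `r_c, r_n ≥ 0`. -/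
theorem IRc_redundant (lc ln pc pn rc rn : ℝ)
    (hlc : 0 < lc) (hle : lc ≤ ln) (hrc : 0 ≤ rc) (hrn : 0 ≤ rn)
    (hIC : rc + Real.exp (-lc * rc) / lc - pc ≥ rn + Real.exp (-lc * rn) / lc - pn)
    (hIRn : rn + Real.exp (-ln * rn) / ln - pn ≥ 0) :
    rc + Real.exp (-lc * rc) / lc - pc ≥ 0 := by
  have hln : 0 < ln := lt_of_lt_of_le hlc hle
  have key : Real.exp (-ln * rn) / ln ≤ Real.exp (-lc * rn) / lc := by
    apply div_le_div₀ (Real.exp_pos _).le (Real.exp_le_exp.mpr (by nlinarith)) hlc hle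
    
  linarith
end

section
/- For all reals 0 < λ_c ≤ λ_n and 0 ≤ r_c ≤ r_n, the inequality exp(-λ_n·r_n)/λ_n - exp(-λ_n·r_c)/λ_n + exp(-λ_c·r_c)/λ_c - exp(-λ_c·r_n)/λ_c ≥ 0 holds. -/
/-! The difference `(exp (-λ rc) - exp (-λ rn)) / λ` is the integral of `exp (-λ t)` over
`[rc, rn]`, and on `t ≥ 0` the integrand `exp (-λ t)` decreases in `λ`. So the expression is
antitone in `λ`, and the inequality compares its values at `λ = lc ≤ ln`. -/

open Real intervalIntegral

theorem integral_exp_mul_real {c : ℝ} (hc : c ≠ 0) (a b : ℝ) :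
    ∫ t in a..b, exp (c * t) = (exp (c * b) - exp (c * a)) / c := by
  rw [integral_comp_mul_left (fun t => exp t) hc, integral_exp, smul_eq_mul, inv_mul_eq_div]

theorem integral_exp_neg_mul_le_of_le {l₁ l₂ a b : ℝ} (hl : l₁ ≤ l₂) (ha : 0 ≤ a) (hab : a ≤ b) :
    ∫ t in a..b, exp (-l₂ * t) ≤ ∫ t in a..b, exp (-l₁ * t) := by
  refine integral_mono_on hab ((by fun_prop : Continuous _).intervalIntegrable _ _)
    ((by fun_prop : Continuous _).intervalIntegrable _ _) fun t ht => exp_le_exp.mpr ?_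
  nlinarith [ht.1]

/-- Verification inequality for the omitted constraint IC_{n,c}. -/
theorem ICnc_inequality (lc ln rc rn : ℝ)
    (hlc : 0 < lc) (hle : lc ≤ ln) (hrc : 0 ≤ rc) (hrn : rc ≤ rn) :
    Real.exp (-ln * rn) / ln - Real.exp (-ln * rc) / ln
      + Real.exp (-lc * rc) / lc - Real.exp (-lc * rn) / lc ≥ 0 := by
  have hln : 0 < ln := hlc.trans_le hle
  have h := integral_exp_neg_mul_le_of_le hle hrc hrn
  rw [integral_exp_mul_real (neg_ne_zero.mpr hln.ne'),
    integral_exp_mul_real (neg_ne_zero.mpr hlc.ne')] at h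
  rw [div_neg, div_neg] at h
  linarith [sub_div (exp (-ln * rn)) (exp (-ln * rc)) ln,
    sub_div (exp (-lc * rn)) (exp (-lc * rc)) lc]
end
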